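/- arXiv:2112.05463 — 5 statements merged into one kernel-verified Lean document; each statement's English description precedes it below -/
import Mathlib

section
/- For every η with 0 < η < 1, the map F_η : 𝕋² → 𝕋² is a bijection which preserves the Haar probability measure μ on 𝕋² (i.e. μ(F_η⁻¹(A)) = μ(A) for every measurable A ⊆ 𝕋²). -/
open MeasureTheory Filter Topology

noncomputable section

/-- The torus `𝕋² = ℝ²/ℤ²`, realized as `AddCircle 1 × AddCircle 1`. -/
abbrev Torus := AddCircle (1:ℝ) × AddCircle (1:ℝ)

/-- The Haar probability measure `μ` on `𝕋²`. -/
noncomputable def μ : Measure Torus := volume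

/-- The representative in `[0,1)` of a point of the circle `ℝ/ℤ`. -/
noncomputable def rep (z : AddCircle (1:ℝ)) : ℝ := (AddCircle.equivIco 1 0 z : ℝ)

/-- The non-monotonic shear `F_η`, defined on representatives `(x,y) ∈ [0,1)²` by
`F_η(x,y) = (x + y/(1-η) mod 1, y)` if `y ≤ 1-η`, and `(x + (1-y)/η mod 1, y)` if `y ≥ 1-η`. -/
noncomputable def Fmap (η : ℝ) (z : Torus) : Torus :=
  (z.1 + (↑(if rep z.2 ≤ 1 - η then rep z.2 / (1 - η) else (1 - rep z.2) / η) :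
      AddCircle (1:ℝ)), z.2)

/-- The non-monotonic shear `G_ξ`, defined on representatives `(x,y) ∈ [0,1)²` by
`G_ξ(x,y) = (x, y + x/(1-ξ) mod 1)` if `x ≤ 1-ξ`, and `(x, y + (1-x)/ξ mod 1)` if `x ≥ 1-ξ`. -/
noncomputable def Gmap (ξ : ℝ) (z : Torus) : Torus :=
  (z.1, z.2 + (↑(if rep z.1 ≤ 1 - ξ then rep z.1 / (1 - ξ) else (1 - rep z.1) / ξ) :
      AddCircle (1:ℝ)))

/-- The composition `H_{(ξ,η)} = G_ξ ∘ F_η`. -/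
noncomputable def Hmap (ξ η : ℝ) : Torus → Torus := Gmap ξ ∘ Fmap η

/-!
`F_η` is the shear `(x, y) ↦ (x + c(y), y)` with the measurable height function
`c(y) = y/(1-η)` resp. `(1-y)/η`. Any such shear is a bijection with inverse `(x, y) ↦ (x - c(y), y)`,
and it preserves a product measure `μ × ν` whenever `μ` is translation invariant: by Fubini, on each
horizontal fibre it is a translation.
-/

section Shear

variable {G Y : Type*} [AddGroup G]

theorem shear_bijective (c : Y → G) : Function.Bijective fun z : G × Y => (z.1 + c z.2, z.2) :=
  Function.bijective_iff_has_inverse.mpr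
    ⟨fun z => (z.1 - c z.2, z.2), fun z => by simp, fun z => by simp⟩

variable [MeasurableSpace G] [MeasurableAdd₂ G] [MeasurableSpace Y]

theorem measurePreserving_shear {μ : Measure G} [μ.IsAddRightInvariant] [SFinite μ]
    {ν : Measure Y} [SFinite ν] {c : Y → G} (hc : Measurable c) :
    MeasurePreserving (fun z : G × Y => (z.1 + c z.2, z.2)) (μ.prod ν) (μ.prod ν) := by
  have hfibre : MeasurePreserving (fun z : Y × G => (z.1, z.2 + c z.1)) (ν.prod μ) (ν.prod μ) :=
    (MeasurePreserving.id ν).skew_product (measurable_snd.add (hc.comp measurable_fst))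
      (ae_of_all _ fun y => (measurePreserving_add_right μ (c y)).map_eq)
  exact (Measure.measurePreserving_swap.comp hfibre).comp Measure.measurePreserving_swap

end Shear

theorem measurable_rep : Measurable rep :=
  measurable_subtype_coe.comp (AddCircle.measurableEquivIco (1 : ℝ) 0).measurable

theorem Fmap_bijective_measurePreserving_general (η : ℝ) :
    Function.Bijective (Fmap η) ∧
      ∀ A : Set Torus, MeasurableSet A → μ (Fmap η ⁻¹' A) = μ A := by
  set c : AddCircle (1 : ℝ) → AddCircle (1 : ℝ) := fun y =>
    ↑(if rep y ≤ 1 - η then rep y / (1 - η) else (1 - rep y) / η)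
  have hF : Fmap η = fun z : Torus => (z.1 + c z.2, z.2) := rfl
  have hc : Measurable c :=
    AddCircle.measurable_mk'.comp <| Measurable.ite (measurableSet_le measurable_rep measurable_const)
      (measurable_rep.div_const _) ((measurable_const.sub measurable_rep).div_const _)
  refine ⟨hF ▸ shear_bijective c, fun A hA => ?_⟩
  rw [μ, Measure.volume_eq_prod, hF]
  exact (measurePreserving_shear hc).measure_preimage hA.nullMeasurableSet

/-- For every `0 < η < 1`, the shear `F_η : 𝕋² → 𝕋²` is a bijection preserving
the Haar probability measure `μ` on `𝕋²`. -/
theorem Fmap_bijective_measurePreserving (η : ℝ) (hη0 : 0 < η) (hη1 : η < 1) :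
    Function.Bijective (Fmap η) ∧
      ∀ A : Set Torus, MeasurableSet A → μ (Fmap η ⁻¹' A) = μ A :=
  Fmap_bijective_measurePreserving_general η
end
end

section
/- For all ξ, η with 0 < ξ, η < 1, the composition H_{(ξ,η)} = G_ξ ∘ F_η is a homeomorphism of 𝕋² which preserves the Haar probability measure μ. -/
open MeasureTheory Filter Topology

noncomputable section

/-! The profile `tent η` rises linearly from `0` at `t = 0` to `1` at `t = 1 - η` and falls back
to `0` at `t = 1`, so it descends to a continuous self-map `tentCircle η` of `ℝ/ℤ`, and
`F_η`, `G_ξ` are the skew translations `(x, y) ↦ (x + tentCircle η y, y)` and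
`(x, y) ↦ (x, y + tentCircle ξ x)`. A skew translation by a continuous map is a homeomorphism
(its inverse subtracts the same amount), and by Fubini it preserves any product of a measure
with a translation-invariant one, since it translates each fibre. -/

namespace Homeomorph

variable {X G : Type*} [TopologicalSpace X] [TopologicalSpace G] [AddGroup G]
  [IsTopologicalAddGroup G] {φ : X → G}

def prodSkewAddSnd (hφ : Continuous φ) : X × G ≃ₜ X × G where
  toFun p := (p.1, p.2 + φ p.1)
  invFun p := (p.1, p.2 - φ p.1)
  left_inv p := by simp
  right_inv p := by simp
  continuous_toFun := by fun_prop
  continuous_invFun := by fun_prop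

def prodSkewAddFst (hφ : Continuous φ) : G × X ≃ₜ G × X where
  toFun p := (p.1 + φ p.2, p.2)
  invFun p := (p.1 - φ p.2, p.2)
  left_inv p := by simp
  right_inv p := by simp
  continuous_toFun := by fun_prop
  continuous_invFun := by fun_prop

end Homeomorph

section SkewTranslation

variable {X G : Type*} [MeasurableSpace X] [MeasurableSpace G] [AddGroup G] [MeasurableAdd₂ G]
  {ν : Measure X} {ρ : Measure G} [SFinite ν] [SFinite ρ] [ρ.IsAddRightInvariant] {φ : X → G}

theorem measurePreserving_prodSkewAddSnd (hφ : Measurable φ) :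
    MeasurePreserving (fun p : X × G => (p.1, p.2 + φ p.1)) (ν.prod ρ) (ν.prod ρ) :=
  (MeasurePreserving.id ν).skew_product (g := fun x y => y + φ x)
    (measurable_snd.add (hφ.comp measurable_fst))
    (ae_of_all _ fun x => (measurePreserving_add_right ρ (φ x)).map_eq)

theorem measurePreserving_prodSkewAddFst (hφ : Measurable φ) :
    MeasurePreserving (fun p : G × X => (p.1 + φ p.2, p.2)) (ρ.prod ν) (ρ.prod ν) :=
  (Measure.measurePreserving_swap.comp (measurePreserving_prodSkewAddSnd hφ)).comp
    Measure.measurePreserving_swap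

end SkewTranslation

def tent (η t : ℝ) : ℝ := if t ≤ 1 - η then t / (1 - η) else (1 - t) / η

theorem continuous_tent {η : ℝ} (hη0 : 0 < η) (hη1 : η < 1) : Continuous (tent η) := by
  refine Continuous.if_le (by fun_prop) (by fun_prop) continuous_id continuous_const ?_
  rintro t rfl
  rw [div_self (by linarith), sub_sub_cancel, div_self hη0.ne']

def tentCircle (η : ℝ) : AddCircle (1 : ℝ) → AddCircle (1 : ℝ) :=
  AddCircle.liftIco 1 0 fun t => (tent η t : AddCircle (1 : ℝ))

theorem continuous_tentCircle {η : ℝ} (hη0 : 0 < η) (hη1 : η < 1) :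
    Continuous (tentCircle η) := by
  have tent_zero : tent η 0 = 0 := by simp [tent, hη1.le]
  have tent_one : tent η 1 = 0 := by simp [tent, hη0]
  refine AddCircle.liftIco_zero_continuous (by rw [tent_zero, tent_one]) ?_
  exact ((AddCircle.continuous_mk' 1).comp (continuous_tent hη0 hη1)).continuousOn

/-- For all `0 < ξ, η < 1`, the composition `H_{(ξ,η)} = G_ξ ∘ F_η` is a homeomorphism
of `𝕋²` which preserves the Haar probability measure `μ`. -/
theorem Hmap_homeomorph_measurePreserving (ξ η : ℝ) (hξ0 : 0 < ξ) (hξ1 : ξ < 1)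
    (hη0 : 0 < η) (hη1 : η < 1) :
    (∃ h : Torus ≃ₜ Torus, ⇑h = Hmap ξ η) ∧
      ∀ A : Set Torus, MeasurableSet A → μ (Hmap ξ η ⁻¹' A) = μ A := by
  have hF := continuous_tentCircle hη0 hη1
  have hG := continuous_tentCircle hξ0 hξ1
  -- `rep` and `AddCircle.liftIco 1 0` both go through the representative in `[0, 1)`.
  have hH : Hmap ξ η =
      (fun z : Torus => (z.1, z.2 + tentCircle ξ z.1)) ∘
        fun z : Torus => (z.1 + tentCircle η z.2, z.2) := rfl
  refine ⟨⟨(Homeomorph.prodSkewAddFst hF).trans (Homeomorph.prodSkewAddSnd hG), hH.symm⟩,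
    fun A hA => ?_⟩
  have hμ : MeasurePreserving (Hmap ξ η) μ μ := by
    rw [hH]
    exact (measurePreserving_prodSkewAddSnd hG.measurable).comp
      (measurePreserving_prodSkewAddFst hF.measurable)
  exact hμ.measure_preimage hA.nullMeasurableSet

end
end

section
/- For all ξ, η with 0 < ξ, η < 1, the matrix M₁ maps the closed positive cone C⁺ = {(a,b) ∈ ℝ² : a ≥ 0 and b ≥ 0} into itself, and for every v ∈ C⁺ one has ‖M₁ v‖₁ ≥ 2‖v‖₁, where ‖(a,b)‖₁ = |a| + |b|. -/
/-! On the cone `C⁺` the `ℓ¹` norm is the sum of the coordinates, and the coordinate sum of `A v`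
is `∑ⱼ (column sum j of A) · vⱼ`. So a matrix with nonnegative entries and all column sums `≥ 2`
preserves `C⁺` and doubles `ℓ¹` norms there; for `M₁` the column sums are `1 + 1/(1-ξ)` and
`1/(1-η) + 1 + 1/((1-ξ)(1-η))`, both `≥ 2` since `1/(1-ξ), 1/(1-η) ≥ 1`. -/

open Matrix

noncomputable section

/-- `M₁ = [[1, 1/(1-η)], [1/(1-ξ), 1 + 1/((1-ξ)(1-η))]]`. -/
noncomputable def M1 (ξ η : ℝ) : Matrix (Fin 2) (Fin 2) ℝ :=
  !![1, 1/(1-η); 1/(1-ξ), 1 + 1/((1-ξ)*(1-η))]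

/-- `M₂ = [[1, 1/(1-η)], [-1/ξ, 1 - 1/(ξ(1-η))]]`. -/
noncomputable def M2 (ξ η : ℝ) : Matrix (Fin 2) (Fin 2) ℝ :=
  !![1, 1/(1-η); -(1/ξ), 1 - 1/(ξ*(1-η))]

/-- `M₃ = [[1, -1/η], [1/(1-ξ), 1 - 1/(η(1-ξ))]]`. -/
noncomputable def M3 (ξ η : ℝ) : Matrix (Fin 2) (Fin 2) ℝ :=
  !![1, -(1/η); 1/(1-ξ), 1 - 1/(η*(1-ξ))]

/-- `M₄ = [[1, -1/η], [-1/ξ, 1 + 1/(ξη)]]`. -/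
noncomputable def M4 (ξ η : ℝ) : Matrix (Fin 2) (Fin 2) ℝ :=
  !![1, -(1/η); -(1/ξ), 1 + 1/(ξ*η)]

namespace Matrix

variable {m n R : Type*} [Fintype n] [Semiring R] [PartialOrder R] [IsOrderedRing R]

theorem mulVec_nonneg {A : Matrix m n R} (hA : ∀ i j, 0 ≤ A i j) {v : n → R} (hv : 0 ≤ v) :
    0 ≤ A *ᵥ v :=
  fun i => Finset.sum_nonneg fun j _ => mul_nonneg (hA i j) (hv j)

theorem mul_sum_le_sum_mulVec [Fintype m] {A : Matrix m n R} {c : R}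
    (hA : ∀ j, c ≤ ∑ i, A i j) {v : n → R} (hv : 0 ≤ v) :
    c * ∑ j, v j ≤ ∑ i, (A *ᵥ v) i :=
  calc c * ∑ j, v j = ∑ j, c * v j := Finset.mul_sum ..
    _ ≤ ∑ j, (∑ i, A i j) * v j :=
      Finset.sum_le_sum fun j _ => mul_le_mul_of_nonneg_right (hA j) (hv j)
    _ = ∑ i, (A *ᵥ v) i := by
      simp only [mulVec, dotProduct, Finset.sum_mul]
      exact Finset.sum_comm

end Matrix

theorem M1_nonneg {ξ η : ℝ} (hξ : ξ ≤ 1) (hη : η ≤ 1) : ∀ i j, 0 ≤ M1 ξ η i j := by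
  have hηξ : 0 ≤ (1 - η)⁻¹ * (1 - ξ)⁻¹ :=
    mul_nonneg (inv_nonneg.2 (sub_nonneg.2 hη)) (inv_nonneg.2 (sub_nonneg.2 hξ))
  intro i j
  fin_cases i <;> fin_cases j <;> simp [M1, hξ, hη]
  exact add_nonneg zero_le_one hηξ

theorem two_le_sum_M1_col {ξ η : ℝ} (hξ0 : 0 ≤ ξ) (hξ1 : ξ < 1) (hη0 : 0 ≤ η) (hη1 : η < 1) :
    ∀ j, 2 ≤ ∑ i, M1 ξ η i j := by
  have hξ : 1 ≤ (1 - ξ)⁻¹ := (one_le_inv₀ (by linarith)).2 (by linarith)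
  have hη : 1 ≤ (1 - η)⁻¹ := (one_le_inv₀ (by linarith)).2 (by linarith)
  have hηξ : 1 ≤ (1 - η)⁻¹ * (1 - ξ)⁻¹ := one_le_mul_of_one_le_of_one_le hη hξ
  intro j
  fin_cases j <;> simp [M1, Fin.sum_univ_two] <;> linarith

/-- For all `0 < ξ, η < 1`, `M₁` maps the closed positive cone
`C⁺ = {(a,b) : a ≥ 0, b ≥ 0}` into itself, and expands the `ℓ¹`-norm
`‖(a,b)‖₁ = |a| + |b|` by a factor at least 2 on this cone. -/
theorem M1_cone_invariant_expanding (ξ η : ℝ) (hξ0 : 0 < ξ) (hξ1 : ξ < 1)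
    (hη0 : 0 < η) (hη1 : η < 1) :
    ∀ v : Fin 2 → ℝ, 0 ≤ v 0 → 0 ≤ v 1 →
      (0 ≤ (M1 ξ η).mulVec v 0 ∧ 0 ≤ (M1 ξ η).mulVec v 1) ∧
      2 * (|v 0| + |v 1|) ≤ |(M1 ξ η).mulVec v 0| + |(M1 ξ η).mulVec v 1| := by
  intro v hv0 hv1
  have hv : 0 ≤ v := fun j => by fin_cases j <;> assumption
  have hMv := mulVec_nonneg (M1_nonneg hξ1.le hη1.le) hv
  refine ⟨⟨hMv 0, hMv 1⟩, ?_⟩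
  have hexp := mul_sum_le_sum_mulVec (two_le_sum_M1_col hξ0.le hξ1 hη0.le hη1) hv
  simp only [Fin.sum_univ_two] at hexp
  rwa [abs_of_nonneg hv0, abs_of_nonneg hv1, abs_of_nonneg (hMv 0), abs_of_nonneg (hMv 1)]
end
end

section
/- For all ξ, η with 0 < ξ, η < 1, the matrix M₄ maps the closed cone C⁻ = {(a,b) ∈ ℝ² : a ≥ 0 and b ≤ 0} into itself, and for every v ∈ C⁻ one has ‖M₄ v‖₁ ≥ 2‖v‖₁, where ‖(a,b)‖₁ = |a| + |b|. -/
open Matrix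

noncomputable section

/-! A `2 × 2` matrix with sign pattern `[[+, -], [-, +]]` maps the quadrant `{a ≥ 0, b ≤ 0}` into
itself, and on that quadrant the `ℓ¹`-norm becomes linear: `‖A v‖₁ = (A v) 0 - (A v) 1`.
Hence `A` expands `‖·‖₁` on the quadrant by the smaller of its two absolute column sums; for `M₄`
these are `1 + 1/ξ` and `1 + 1/η + 1/(ξη)`, both at least `2` when `0 < ξ, η < 1`. -/

namespace Matrix

variable {R : Type*} [CommRing R] [LinearOrder R] [IsStrictOrderedRing R]

def HasCheckerboardSigns (A : Matrix (Fin 2) (Fin 2) R) : Prop :=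
  0 ≤ A 0 0 ∧ A 0 1 ≤ 0 ∧ A 1 0 ≤ 0 ∧ 0 ≤ A 1 1

namespace HasCheckerboardSigns

variable {A : Matrix (Fin 2) (Fin 2) R} {v : Fin 2 → R}

theorem mulVec_mem_quadrant (hA : A.HasCheckerboardSigns) (hv0 : 0 ≤ v 0) (hv1 : v 1 ≤ 0) :
    0 ≤ (A *ᵥ v) 0 ∧ (A *ᵥ v) 1 ≤ 0 := by
  obtain ⟨h00, h01, h10, h11⟩ := hA
  simp only [mulVec_fin_two, cons_val_zero, cons_val_one]
  exact ⟨add_nonneg (mul_nonneg h00 hv0) (mul_nonneg_of_nonpos_of_nonpos h01 hv1),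
    add_nonpos (mul_nonpos_of_nonpos_of_nonneg h10 hv0) (mul_nonpos_of_nonneg_of_nonpos h11 hv1)⟩

theorem mul_l1_le_l1_mulVec (hA : A.HasCheckerboardSigns) {c : R} (hc0 : c ≤ A 0 0 - A 1 0)
    (hc1 : c ≤ A 1 1 - A 0 1) (hv0 : 0 ≤ v 0) (hv1 : v 1 ≤ 0) :
    c * (|v 0| + |v 1|) ≤ |(A *ᵥ v) 0| + |(A *ᵥ v) 1| := by
  obtain ⟨hAv0, hAv1⟩ := hA.mulVec_mem_quadrant hv0 hv1
  rw [abs_of_nonneg hAv0, abs_of_nonpos hAv1, abs_of_nonneg hv0, abs_of_nonpos hv1]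
  simp only [mulVec_fin_two, cons_val_zero, cons_val_one]
  nlinarith [mul_le_mul_of_nonneg_right hc0 hv0, mul_le_mul_of_nonneg_right hc1 (neg_nonneg.2 hv1)]

end HasCheckerboardSigns

end Matrix

theorem M4_hasCheckerboardSigns {ξ η : ℝ} (hξ : 0 < ξ) (hη : 0 < η) :
    (M4 ξ η).HasCheckerboardSigns := by
  simp only [HasCheckerboardSigns, M4, of_apply, cons_val_zero, cons_val_one, neg_nonpos]
  refine ⟨zero_le_one, ?_, ?_, ?_⟩ <;> positivity

theorem two_le_colSums_M4 {ξ η : ℝ} (hξ0 : 0 < ξ) (hξ1 : ξ < 1) (hη0 : 0 < η) (hη1 : η < 1) :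
    2 ≤ M4 ξ η 0 0 - M4 ξ η 1 0 ∧ 2 ≤ M4 ξ η 1 1 - M4 ξ η 0 1 := by
  have hξ : 1 ≤ 1 / ξ := one_le_one_div hξ0 hξ1.le
  have hη : 1 ≤ 1 / η := one_le_one_div hη0 hη1.le
  have hξη : 0 < 1 / (ξ * η) := by positivity
  simp only [M4, of_apply, cons_val_zero, cons_val_one]
  constructor <;> linarith

/-- For all `0 < ξ, η < 1`, `M₄` maps the closed cone
`C⁻ = {(a,b) : a ≥ 0, b ≤ 0}` into itself, and expands the `ℓ¹`-norm
`‖(a,b)‖₁ = |a| + |b|` by a factor at least 2 on this cone. -/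
theorem M4_cone_invariant_expanding (ξ η : ℝ) (hξ0 : 0 < ξ) (hξ1 : ξ < 1)
    (hη0 : 0 < η) (hη1 : η < 1) :
    ∀ v : Fin 2 → ℝ, 0 ≤ v 0 → v 1 ≤ 0 →
      (0 ≤ (M4 ξ η).mulVec v 0 ∧ (M4 ξ η).mulVec v 1 ≤ 0) ∧
      2 * (|v 0| + |v 1|) ≤ |(M4 ξ η).mulVec v 0| + |(M4 ξ η).mulVec v 1| := by
  intro v hv0 hv1
  have hM4 := M4_hasCheckerboardSigns hξ0 hη0
  obtain ⟨hc0, hc1⟩ := two_le_colSums_M4 hξ0 hξ1 hη0 hη1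
  exact ⟨hM4.mulVec_mem_quadrant hv0 hv1, hM4.mul_l1_le_l1_mulVec hc0 hc1 hv0 hv1⟩
end
end

section
/- Let R : 𝕋² → 𝕋² be the negation map R(x,y) = (-x,-y). Then for all ξ, η with 0 < ξ, η < 1, one has F_{1-η} ∘ R ∘ F_η ∘ R = id and G_{1-ξ} ∘ R ∘ G_ξ ∘ R = id on 𝕋² (i.e. R ∘ F_η ∘ R = F_{1-η}⁻¹ and R ∘ G_ξ ∘ R = G_{1-ξ}⁻¹). -/
open MeasureTheory Filter Topology

noncomputable section

/-- The negation map `R(x,y) = (-x,-y)` on `𝕋²`. -/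
def Rmap : Torus → Torus := fun z => (-z.1, -z.2)

/-!
`R ∘ F_η ∘ R` is the shear `(x, y) ↦ (x - p_η(rep(-y)), y)`, where `p_η` is the tent profile of
`F_η`. For `y ≠ 0` we have `rep(-y) = 1 - rep y`, and reflecting the tent `p_η` about `1/2` gives
`p_{1-η}` (both equal `1` at the kink), so `F_{1-η}` shifts `x` back by the same amount; at `y = 0`
both profiles vanish. The same computation in the first coordinate handles `G`.
-/

/-- The tent profile of `F_a` and `G_a`, peaking with value `1` at `t = 1 - a`. -/
def shearProfile (a t : ℝ) : ℝ := if t ≤ 1 - a then t / (1 - a) else (1 - t) / a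

lemma Fmap_apply (a : ℝ) (z : Torus) : Fmap a z = (z.1 + ↑(shearProfile a (rep z.2)), z.2) := rfl

lemma Gmap_apply (a : ℝ) (z : Torus) : Gmap a z = (z.1, z.2 + ↑(shearProfile a (rep z.1))) := rfl

lemma shearProfile_one_sub (a : ℝ) {t : ℝ} (ht0 : 0 < t) (ht1 : t < 1) :
    shearProfile a (1 - t) = shearProfile (1 - a) t := by
  unfold shearProfile
  rcases lt_trichotomy t a with hta | rfl | hat
  · rw [if_neg (by linarith), if_pos (by linarith)]
    ring_nf
  · rw [if_pos le_rfl, sub_sub_cancel, if_pos le_rfl, div_self (by linarith),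
      div_self ht0.ne']
  · rw [if_pos (by linarith), if_neg (by linarith)]

lemma rep_coe (x : ℝ) : rep (x : AddCircle (1:ℝ)) = Int.fract x := by
  rw [rep, AddCircle.coe_equivIco_mk_apply, div_one, mul_one]

lemma coe_rep (z : AddCircle (1:ℝ)) : (rep z : AddCircle (1:ℝ)) = z :=
  (AddCircle.equivIco 1 0).symm_apply_apply z

lemma fract_rep (z : AddCircle (1:ℝ)) : Int.fract (rep z) = rep z := by
  rw [← rep_coe, coe_rep]

lemma rep_neg (z : AddCircle (1:ℝ)) : rep (-z) = Int.fract (-rep z) := by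
  rw [← rep_coe, AddCircle.coe_neg, coe_rep]

lemma shearProfile_rep_neg {a : ℝ} (ha0 : 0 ≤ a) (ha1 : a ≤ 1) (z : AddCircle (1:ℝ)) :
    shearProfile a (rep (-z)) = shearProfile (1 - a) (rep z) := by
  rw [rep_neg]
  by_cases h : rep z = 0
  · simp [h, shearProfile, ha0, ha1]
  · have hfract : Int.fract (rep z) ≠ 0 := by rwa [fract_rep]
    rw [Int.fract_neg hfract, fract_rep]
    have hpos : 0 < rep z := ((fract_rep z).symm ▸ Int.fract_nonneg _).lt_of_ne' h
    exact shearProfile_one_sub a hpos ((fract_rep z).symm ▸ Int.fract_lt_one _)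

lemma Fmap_one_sub_comp_Rmap_comp_Fmap_comp_Rmap {a : ℝ} (ha0 : 0 ≤ a) (ha1 : a ≤ 1) :
    Fmap (1 - a) ∘ Rmap ∘ Fmap a ∘ Rmap = id := by
  funext z
  simp only [Function.comp_apply, Fmap_apply, Rmap, neg_neg, shearProfile_rep_neg ha0 ha1]
  simp

lemma Gmap_one_sub_comp_Rmap_comp_Gmap_comp_Rmap {a : ℝ} (ha0 : 0 ≤ a) (ha1 : a ≤ 1) :
    Gmap (1 - a) ∘ Rmap ∘ Gmap a ∘ Rmap = id := by
  funext z
  simp only [Function.comp_apply, Gmap_apply, Rmap, neg_neg, shearProfile_rep_neg ha0 ha1]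
  simp

/-- For all `0 < ξ, η < 1`: `F_{1-η} ∘ R ∘ F_η ∘ R = id` and `G_{1-ξ} ∘ R ∘ G_ξ ∘ R = id`
on `𝕋²` (i.e. `R ∘ F_η ∘ R = F_{1-η}⁻¹` and `R ∘ G_ξ ∘ R = G_{1-ξ}⁻¹`). -/
theorem negation_conjugacy (ξ η : ℝ) (hξ0 : 0 < ξ) (hξ1 : ξ < 1)
    (hη0 : 0 < η) (hη1 : η < 1) :
    Fmap (1-η) ∘ Rmap ∘ Fmap η ∘ Rmap = id ∧
    Gmap (1-ξ) ∘ Rmap ∘ Gmap ξ ∘ Rmap = id :=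
  ⟨Fmap_one_sub_comp_Rmap_comp_Fmap_comp_Rmap hη0.le hη1.le,
    Gmap_one_sub_comp_Rmap_comp_Gmap_comp_Rmap hξ0.le hξ1.le⟩
end
end
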